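/- Let n ≥ 1, 1 < p < ∞, δ > 0 and let N > n be real. There is a constant C > 0 such that for every j₀ ∈ ℤ, k₀ ∈ ℤ^n, every j ≥ j₀, and every family (a^{ε'}_{j',k'})_{ε'∈E_n, j'∈ℤ, k'∈ℤ^n} of nonnegative real numbers: Σ_{ε∈E_n} Σ_{k : Q_{j,k} ⊆ Q_{j₀,k₀}} ( Σ_{j' ≥ j−5} Σ_{w∈ℤ^n} (1+|w|)^{−N} ( Σ_{ε'∈E_n} Σ_{k' : Q_{j',k'} ⊆ Q^w_{j,k}} (a^{ε'}_{j',k'})^p )^{1/p} )^p ≤ C Σ_{j' ≥ j−5} 2^{δ(j'−j)} Σ_{w∈ℤ^n} (1+|w|)^{−N} Σ_{ε'∈E_n} Σ_{k' : Q_{j',k'} ⊆ Q^w_{j₀,k₀}} (a^{ε'}_{j',k'})^p, both sides interpreted in [0,∞]. -/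

import Mathlib

noncomputable section

open MeasureTheory Real Complex
open scoped ENNReal NNReal

/-- `ℝⁿ` modeled as functions `Fin n → ℝ`. -/
abbrev Vec (n : ℕ) : Type := Fin n → ℝ

/-- Integer lattice `ℤⁿ`. -/
abbrev IVec (n : ℕ) : Type := Fin n → ℤ

/-- The index set `E_n = {0,1}ⁿ \ {0}`, with `{0,1}ⁿ` modeled as `Fin n → Bool`. -/
abbrev En (n : ℕ) : Type := {ε : Fin n → Bool // ε ≠ fun _ => false}

/-- The Euclidean norm on `Vec n`. -/
def enorm2 {n : ℕ} (x : Vec n) : ℝ := Real.sqrt (∑ i, (x i) ^ 2)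

/-- The dyadic cube `Q_{j,k} = {x : 2^j x − k ∈ [0,1)ⁿ}` of side length `2^{−j}`. -/
def dyadicCube (n : ℕ) (j : ℤ) (k : IVec n) : Set (Vec n) :=
  {x | ∀ i, (k i : ℝ) ≤ (2:ℝ) ^ j * x i ∧ (2:ℝ) ^ j * x i < (k i : ℝ) + 1}

/-- `Q^w_{j,k} = 2^{8−j} w + tilde-Q_{j,k}`, where `tilde-Q_{j,k}` is the unique dyadic
cube of side length `2^{8−j}` containing `Q_{j,k}` (its index is `⌊k/2^8⌋`). -/
def QW (n : ℕ) (j : ℤ) (k w : IVec n) : Set (Vec n) :=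
  dyadicCube n (j - 8) (fun i => Int.fdiv (k i) 256 + w i)

/-!
Fix `k` and write `G_{j',k'} = Σ_{ε'} (a^{ε'}_{j',k'})^p`. Hölder's inequality over the pairs
`(j', w)`, with `(1+|w|)^{-N}` split into its `1/p`-th and `1/q`-th powers and the factors
`2^{±δ(j'-j)/p}` inserted, bounds the `p`-th power of the inner sum by
`Σ_{j'} 2^{δ(j'-j)} Σ_w (1+|w|)^{-N} Σ_{k' : Q_{j',k'} ⊆ Q^w_{j,k}} G_{j',k'}` times a geometric
series times `Σ_w (1+|w|)^{-N}`, which is finite since `N > n`.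

Summing over `k`: a cube `Q_{j',k'}` lies in `Q^w_{j,k}` for exactly one `w`, namely
`w = ⌊k'/2^{j'-j+8}⌋ - ⌊k/2^8⌋`, so it remains to bound `Σ_k (1+|w(k)|)^{-N}` by a multiple of
`(1+|w₀|)^{-N}`, where `w₀` is the corresponding index at level `j₀`. With `S = 2^{j-j₀}`, the
points `w(k)` lie in the cube of half-side `S` around `S w₀`, each hit at most `2^{8n}` times.
If `|w₀|_∞ ≥ 2`, every `w` in that cube has `1+|w| ≳ S(1+|w₀|)`, so its `(2S)^n` points carry
weight `≲ S^{n-N} (1+|w₀|)^{-N} ≤ (1+|w₀|)^{-N}`; otherwise `(1+|w₀|)^{-N}` is bounded below and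
the whole lattice sum is a bound.
-/

lemma mem_dyadicCube_iff {n : ℕ} {j : ℤ} {k : IVec n} {x : Vec n} :
    x ∈ dyadicCube n j k ↔ ∀ i, ⌊(2:ℝ) ^ j * x i⌋ = k i := by
  simp only [dyadicCube, Set.mem_ofPred_eq, Int.floor_eq_iff]

lemma floor_zpow_mul_of_le {J j : ℤ} (h : J ≤ j) (y : ℝ) :
    ⌊(2:ℝ) ^ J * y⌋ = ⌊(2:ℝ) ^ j * y⌋ / 2 ^ (j - J).toNat := by
  have hcast : (((2:ℤ) ^ (j - J).toNat : ℤ) : ℝ) = (2:ℝ) ^ (j - J) := by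
    rw [Int.cast_pow, Int.cast_ofNat, ← zpow_natCast, Int.toNat_of_nonneg (by omega)]
  rw [← Int.floor_div_cast_of_nonneg (by positivity), hcast, mul_div_right_comm,
    ← zpow_sub₀ two_ne_zero, sub_sub_cancel]

lemma dyadicCube_subset_dyadicCube_iff {n : ℕ} {J j : ℤ} (h : J ≤ j) (k m : IVec n) :
    dyadicCube n j k ⊆ dyadicCube n J m ↔ ∀ i, k i / 2 ^ (j - J).toNat = m i := by
  constructor
  · intro hsub i
    set x : Vec n := fun i => (2:ℝ) ^ (-j) * k i
    have hx : x ∈ dyadicCube n j k := mem_dyadicCube_iff.2 fun i' => by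
      simp [x, ← mul_assoc, mul_inv_cancel₀ (zpow_ne_zero j (two_ne_zero : (2:ℝ) ≠ 0))]
    have := mem_dyadicCube_iff.1 (hsub hx) i
    rwa [floor_zpow_mul_of_le h, mem_dyadicCube_iff.1 hx i] at this
  · intro hk x hx
    exact mem_dyadicCube_iff.2 fun i => by
      rw [floor_zpow_mul_of_le h, mem_dyadicCube_iff.1 hx i, hk i]

lemma dyadicCube_subset_QW_iff {n : ℕ} {j j' : ℤ} (h : j - 8 ≤ j') (k w k' : IVec n) :
    dyadicCube n j' k' ⊆ QW n j k w ↔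
      ∀ i, k' i / 2 ^ (j' - (j - 8)).toNat = k i / 256 + w i := by
  simp only [QW, dyadicCube_subset_dyadicCube_iff h,
    Int.fdiv_eq_ediv_of_nonneg _ (by norm_num : (0:ℤ) ≤ 256)]

lemma abs_le_enorm2 {n : ℕ} (x : Vec n) (i : Fin n) : |x i| ≤ enorm2 x := by
  rw [← Real.sqrt_sq_eq_abs]
  exact Real.sqrt_le_sqrt (Finset.single_le_sum (f := fun i => x i ^ 2)
    (fun i _ => sq_nonneg _) (Finset.mem_univ i))

lemma enorm2_le_sqrt_mul {n : ℕ} {x : Vec n} {M : ℝ} (hM : 0 ≤ M) (h : ∀ i, |x i| ≤ M) :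
    enorm2 x ≤ Real.sqrt n * M := by
  rw [← Real.sqrt_sq hM, ← Real.sqrt_mul (Nat.cast_nonneg n)]
  refine Real.sqrt_le_sqrt ?_
  calc ∑ i, x i ^ 2 ≤ ∑ _i : Fin n, M ^ 2 :=
        Finset.sum_le_sum fun i _ => sq_le_sq' (abs_le.1 (h i)).1 (abs_le.1 (h i)).2
    _ = n * M ^ 2 := by simp

lemma one_add_enorm2_pos {n : ℕ} (x : Vec n) : 0 < 1 + enorm2 x :=
  add_pos_of_pos_of_nonneg one_pos (Real.sqrt_nonneg _)

def decayWeight {n : ℕ} (N : ℝ) (w : IVec n) : ℝ≥0∞ :=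
  ENNReal.ofReal ((1 + enorm2 (fun i => (w i : ℝ))) ^ (-N))

lemma tsum_pi_prod {α : Type*} (h : α → ℝ≥0∞) (m : ℕ) :
    ∑' w : Fin m → α, ∏ i, h (w i) = (∑' x, h x) ^ m := by
  induction m with
  | zero => simp [tsum_fintype]
  | succ m ih =>
    rw [← (Fin.consEquiv fun _ => α).tsum_eq, ENNReal.tsum_prod', pow_succ', ← ih,
      ← ENNReal.tsum_mul_right]
    refine tsum_congr fun x => ?_
    rw [← ENNReal.tsum_mul_left]
    refine tsum_congr fun w => ?_
    simp [Fin.consEquiv, Fin.prod_univ_succ]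

lemma tsum_one_add_abs_rpow_neg_lt_top {σ : ℝ} (hσ : 1 < σ) :
    ∑' m : ℤ, ENNReal.ofReal ((1 + |(m:ℝ)|) ^ (-σ)) < ⊤ := by
  have hsum : Summable fun m : ℤ => (1 + |(m:ℝ)|) ^ (-σ) := by
    refine ((Real.summable_one_div_int_add_rpow (1/2) σ).2 hσ).of_nonneg_of_le
      (fun m => by positivity) fun m => ?_
    have hpos : 0 < |(m:ℝ) + 1/2| := abs_pos.2 fun h => by
      have : (2 * m + 1 : ℤ) = 0 := by exact_mod_cast (by linarith : 2 * (m:ℝ) + 1 = 0)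
      omega
    rw [Real.rpow_neg (by positivity), ← one_div]
    refine one_div_le_one_div_of_le (by positivity) (Real.rpow_le_rpow hpos.le ?_ (by linarith))
    linarith [abs_add_le (m:ℝ) (1/2), abs_of_pos (one_half_pos : (0:ℝ) < 1/2)]
  rw [← ENNReal.ofReal_tsum_of_nonneg (fun m => by positivity) hsum]
  exact ENNReal.ofReal_lt_top

lemma decayWeight_le_prod {n : ℕ} {N σ : ℝ} (hσ : 0 ≤ σ) (hσN : n * σ ≤ N)
    (w : IVec n) :
    decayWeight N w ≤ ∏ i, ENNReal.ofReal ((1 + |(w i : ℝ)|) ^ (-σ)) := by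
  rw [decayWeight, ← ENNReal.ofReal_prod_of_nonneg fun i _ => by positivity]
  refine ENNReal.ofReal_le_ofReal ?_
  set r := 1 + enorm2 (fun i => (w i : ℝ))
  have hr : 1 ≤ r := le_add_of_nonneg_right (Real.sqrt_nonneg _)
  calc r ^ (-N) ≤ r ^ (-(n * σ)) := Real.rpow_le_rpow_of_exponent_le hr (by linarith)
    _ = ∏ _i : Fin n, r ^ (-σ) := by
      rw [Finset.prod_const, Finset.card_univ, Fintype.card_fin, ← Real.rpow_mul_natCast
        (by linarith)]
      ring_nf
    _ ≤ ∏ i, (1 + |(w i : ℝ)|) ^ (-σ) :=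
      Finset.prod_le_prod (fun i _ => by positivity) fun i _ =>
        Real.rpow_le_rpow_of_nonpos (by positivity)
          (by linarith [abs_le_enorm2 (fun i => (w i : ℝ)) i]) (by linarith)

lemma tsum_decayWeight_ne_top {n : ℕ} {N : ℝ} (hN : (n:ℝ) < N) :
    ∑' w : IVec n, decayWeight N w ≠ ⊤ := by
  set σ : ℝ := 1 + (N - n) / (n + 1)
  have hσ : 1 < σ := lt_add_of_pos_right 1 (by positivity)
  have hσN : n * σ ≤ N := by
    have : (n:ℝ) * ((N - n) / (n + 1)) ≤ N - n := by
      rw [mul_div_assoc']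
      exact div_le_of_le_mul₀ (by positivity) (by linarith) (by nlinarith)
    linarith [show (n:ℝ) * σ = n + n * ((N - n) / (n + 1)) by ring]
  refine ne_top_of_le_ne_top ?_
    ((ENNReal.tsum_le_tsum (decayWeight_le_prod (by linarith) hσN)).trans_eq
      (tsum_pi_prod (fun m : ℤ => ENNReal.ofReal ((1 + |(m:ℝ)|) ^ (-σ))) n))
  exact (ENNReal.pow_lt_top (tsum_one_add_abs_rpow_neg_lt_top hσ)).ne

lemma tsum_ofReal_two_rpow_neg_mul (η : ℝ) (j L : ℤ) :
    ∑' j' : {j' : ℤ // j - L ≤ j'},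
        ENNReal.ofReal ((2:ℝ) ^ (-(η * ((j' : ℤ) - (j : ℝ)))))
      = ENNReal.ofReal ((2:ℝ) ^ (η * L)) * (1 - ENNReal.ofReal ((2:ℝ) ^ (-η)))⁻¹ := by
  let e : ℕ ≃ {j' : ℤ // j - L ≤ j'} :=
    { toFun := fun m => ⟨j - L + m, by omega⟩
      invFun := fun j' => (j'.1 - (j - L)).toNat
      left_inv := fun m => by simp
      right_inv := fun j' => Subtype.ext (by have := j'.2; simp; omega) }
  rw [← e.tsum_eq, ← ENNReal.tsum_geometric, ← ENNReal.tsum_mul_left]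
  refine tsum_congr fun m => ?_
  rw [← ENNReal.ofReal_pow (by positivity), ← ENNReal.ofReal_mul (by positivity),
    ← Real.rpow_natCast, ← Real.rpow_mul zero_le_two, ← Real.rpow_add two_pos]
  congr 2
  simp only [e, Equiv.coe_fn_mk, Int.cast_add, Int.cast_sub, Int.cast_natCast]
  ring

lemma ENNReal.inner_le_Lp_mul_Lq_tsum {ι : Type*} {p q : ℝ} (hpq : p.HolderConjugate q)
    (f g : ι → ℝ≥0∞) :
    ∑' i, f i * g i ≤ (∑' i, f i ^ p) ^ (1/p) * (∑' i, g i ^ q) ^ (1/q) := by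
  rw [ENNReal.tsum_eq_iSup_sum]
  refine iSup_le fun s => (ENNReal.inner_le_Lp_mul_Lq s f g hpq).trans ?_
  exact mul_le_mul' (ENNReal.rpow_le_rpow (ENNReal.sum_le_tsum s) hpq.one_div_nonneg)
    (ENNReal.rpow_le_rpow (ENNReal.sum_le_tsum s) hpq.symm.one_div_nonneg)

/-- Hölder's inequality for `c S^{1/p} = (θ c S)^{1/p} · (θ^{-q/p} c)^{1/q}`. -/
lemma tsum_mul_rpow_one_div_le {ι : Type*} {p q : ℝ} (hpq : p.HolderConjugate q)
    (c θ S : ι → ℝ≥0∞) (hθ₀ : ∀ i, θ i ≠ 0) (hθ : ∀ i, θ i ≠ ⊤) :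
    (∑' i, c i * S i ^ (1/p)) ^ p
      ≤ (∑' i, θ i ^ (-(q/p)) * c i) ^ (p/q) * ∑' i, θ i * c i * S i := by
  have hp : 0 ≤ 1/p := hpq.one_div_nonneg
  have hq : 0 ≤ 1/q := hpq.symm.one_div_nonneg
  have hsplit : ∀ i, c i * S i ^ (1/p)
      = (θ i * c i * S i) ^ (1/p) * (θ i ^ (-(q/p)) * c i) ^ (1/q) := by
    intro i
    have hθi : θ i ^ (1/p) * θ i ^ (-(q/p) * (1/q)) = 1 := by
      rw [← ENNReal.rpow_add _ _ (hθ₀ i) (hθ i),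
        show 1/p + -(q/p) * (1/q) = 0 by field_simp [hpq.symm.ne_zero]; ring, ENNReal.rpow_zero]
    have hci : c i ^ (1/p) * c i ^ (1/q) = c i := by
      rw [← ENNReal.rpow_add_of_nonneg _ _ hp hq, one_div, one_div, hpq.inv_add_inv_eq_one,
        ENNReal.rpow_one]
    rw [ENNReal.mul_rpow_of_nonneg _ _ hp, ENNReal.mul_rpow_of_nonneg _ _ hp,
      ENNReal.mul_rpow_of_nonneg _ _ hq, ← ENNReal.rpow_mul,
      show θ i ^ (1/p) * c i ^ (1/p) * S i ^ (1/p) * (θ i ^ (-(q/p) * (1/q)) * c i ^ (1/q))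
        = (θ i ^ (1/p) * θ i ^ (-(q/p) * (1/q))) * (c i ^ (1/p) * c i ^ (1/q)) * S i ^ (1/p) by
          ring, hθi, hci, one_mul]
  have hpow : ∀ (x : ℝ≥0∞) (r : ℝ), r ≠ 0 → (x ^ (1/r)) ^ r = x := fun x r hr => by
    rw [one_div, ENNReal.rpow_inv_rpow hr]
  calc (∑' i, c i * S i ^ (1/p)) ^ p
      = (∑' i, (θ i * c i * S i) ^ (1/p) * (θ i ^ (-(q/p)) * c i) ^ (1/q)) ^ p := by
        rw [tsum_congr hsplit]
    _ ≤ ((∑' i, ((θ i * c i * S i) ^ (1/p)) ^ p) ^ (1/p)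
          * (∑' i, ((θ i ^ (-(q/p)) * c i) ^ (1/q)) ^ q) ^ (1/q)) ^ p :=
        ENNReal.rpow_le_rpow (ENNReal.inner_le_Lp_mul_Lq_tsum hpq _ _) hpq.nonneg
    _ = (∑' i, θ i ^ (-(q/p)) * c i) ^ (p/q) * ∑' i, θ i * c i * S i := by
        simp only [hpow _ _ hpq.ne_zero, hpow _ _ hpq.symm.ne_zero]
        rw [ENNReal.mul_rpow_of_nonneg _ _ hpq.nonneg, hpow _ _ hpq.ne_zero, ← ENNReal.rpow_mul,
          one_div_mul_eq_div, mul_comm]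

lemma tsum_tsum_decayWeight_rpow_le {n : ℕ} {p q : ℝ} (hpq : p.HolderConjugate q) (δ N : ℝ)
    (j L : ℤ) (S : {j' : ℤ // j - L ≤ j'} → IVec n → ℝ≥0∞) :
    (∑' (j' : {j' : ℤ // j - L ≤ j'}) (w : IVec n), decayWeight N w * S j' w ^ (1/p)) ^ p
      ≤ (ENNReal.ofReal ((2:ℝ) ^ (δ * q / p * L))
          * (1 - ENNReal.ofReal ((2:ℝ) ^ (-(δ * q / p))))⁻¹
          * ∑' w : IVec n, decayWeight N w) ^ (p/q)
        * ∑' j' : {j' : ℤ // j - L ≤ j'},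
          ENNReal.ofReal ((2:ℝ) ^ (δ * ((j' : ℤ) - (j : ℝ)))) * ∑' w, decayWeight N w * S j' w := by
  set θ : {j' : ℤ // j - L ≤ j'} → ℝ≥0∞ :=
    fun j' => ENNReal.ofReal ((2:ℝ) ^ (δ * ((j' : ℤ) - (j : ℝ))))
  have hθ : ∀ j', θ j' ^ (-(q/p))
      = ENNReal.ofReal ((2:ℝ) ^ (-(δ * q / p * ((j' : ℤ) - (j : ℝ))))) := fun j' => by
      rw [ENNReal.ofReal_rpow_of_pos (by positivity), ← Real.rpow_mul zero_le_two]
      ring_nf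
  have h := tsum_mul_rpow_one_div_le (ι := {j' : ℤ // j - L ≤ j'} × IVec n) hpq
    (fun x => decayWeight N x.2) (fun x => θ x.1) (fun x => S x.1 x.2)
    (fun x => by simp [θ]; positivity) (fun _ => ENNReal.ofReal_ne_top)
  simp only [ENNReal.tsum_prod', hθ, ENNReal.tsum_mul_left, ENNReal.tsum_mul_right, mul_assoc,
    tsum_ofReal_two_rpow_neg_mul] at h
  simpa only [mul_assoc] using h

def scaledBox {n : ℕ} (S : ℤ) (c : IVec n) : Finset (IVec n) :=
  Fintype.piFinset fun i => Finset.Ioo (S * c i - S) (S * c i + S)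

lemma card_scaledBox_le {n : ℕ} {S : ℤ} (hS : 0 < S) (c : IVec n) :
    ((scaledBox S c).card : ℝ) ≤ (2 * S : ℝ) ^ n := by
  rw [scaledBox, Fintype.card_piFinset]
  push_cast
  refine (Finset.prod_le_prod (fun _ _ => by positivity) fun i _ => ?_).trans_eq
    (by rw [Finset.prod_const, Finset.card_univ, Fintype.card_fin])
  rw [Int.card_Ioo]
  exact_mod_cast (show ((S * c i + S - (S * c i - S) - 1).toNat : ℤ) ≤ 2 * S by omega)

lemma mul_one_add_enorm2_le_of_mem_scaledBox {n : ℕ} {S : ℤ} (hS : 0 < S) {c u : IVec n}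
    (hc : ∃ i, 1 < |c i|) (hu : u ∈ scaledBox S c) :
    S / (4 * Real.sqrt n) * (1 + enorm2 (fun i => (c i : ℝ)))
      ≤ 1 + enorm2 (fun i => (u i : ℝ)) := by
  obtain ⟨i₀, -, hmax⟩ := Finset.exists_max_image Finset.univ (fun i => |c i|)
    ⟨hc.choose, Finset.mem_univ _⟩
  set m : ℝ := |(c i₀ : ℝ)|
  have hm : 2 ≤ m := by
    rw [show m = ((|c i₀| : ℤ) : ℝ) from (Int.cast_abs).symm]
    exact_mod_cast (show 2 ≤ |c i₀| from hc.choose_spec.trans_le (hmax _ (Finset.mem_univ _)))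
  have hn : 1 ≤ Real.sqrt n :=
    Real.one_le_sqrt.2 (Nat.one_le_cast.2 i₀.pos)
  have hSR : (0:ℝ) < S := by exact_mod_cast hS
  have hc_le : enorm2 (fun i => (c i : ℝ)) ≤ Real.sqrt n * m :=
    enorm2_le_sqrt_mul (abs_nonneg _) fun i => by
      simp only [m, ← Int.cast_abs]; exact_mod_cast hmax i (Finset.mem_univ _)
  have hu_ge : S * m - S ≤ |(u i₀ : ℝ)| := by
    have h := Finset.mem_Ioo.1 (Fintype.mem_piFinset.1 hu i₀)
    have hdist : |(u i₀ : ℝ) - S * c i₀| ≤ S := by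
      have h₁ : (S * c i₀ - S : ℝ) < u i₀ := by exact_mod_cast h.1
      have h₂ : (u i₀ : ℝ) < S * c i₀ + S := by exact_mod_cast h.2
      rw [abs_le]; constructor <;> linarith
    have := abs_sub_abs_le_abs_sub (S * (c i₀ : ℝ)) (u i₀)
    rw [abs_sub_comm, abs_mul, abs_of_pos hSR] at this
    linarith
  calc S / (4 * Real.sqrt n) * (1 + enorm2 (fun i => (c i : ℝ)))
      ≤ S / (4 * Real.sqrt n) * (2 * Real.sqrt n * m) := by gcongr; nlinarith
    _ = S * m / 2 := by field_simp; ring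
    _ ≤ |(u i₀ : ℝ)| := by nlinarith
    _ ≤ 1 + enorm2 (fun i => (u i : ℝ)) := by
      linarith [abs_le_enorm2 (fun i => (u i : ℝ)) i₀]

lemma exists_sum_decayWeight_scaledBox_le {n : ℕ} {N : ℝ} (hN : (n:ℝ) < N) :
    ∃ C : ℝ≥0∞, C ≠ ⊤ ∧ ∀ S : ℤ, 0 < S → ∀ c : IVec n,
      ∑ u ∈ scaledBox S c, decayWeight N u ≤ C * decayWeight N c := by
  have hN0 : 0 ≤ N := (Nat.cast_nonneg n).trans hN.le
  set β := ENNReal.ofReal ((1 + Real.sqrt n) ^ (-N))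
  have hβ : β ≠ 0 := by simp only [β, ne_eq, ENNReal.ofReal_eq_zero, not_le]; positivity
  refine ⟨(∑' w : IVec n, decayWeight N w) * β⁻¹
      + ENNReal.ofReal (2 ^ n * (4 * Real.sqrt n) ^ N),
    ENNReal.add_ne_top.2 ⟨ENNReal.mul_ne_top (tsum_decayWeight_ne_top hN)
      (ENNReal.inv_ne_top.2 hβ), ENNReal.ofReal_ne_top⟩, fun S hS c => ?_⟩
  by_cases hc : ∀ i, |c i| ≤ 1
  · have hβc : β ≤ decayWeight N c := by
      refine ENNReal.ofReal_le_ofReal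
        (Real.rpow_le_rpow_of_nonpos (one_add_enorm2_pos _) ?_ (by linarith))
      have := enorm2_le_sqrt_mul zero_le_one fun i => by
        rw [← Int.cast_abs]; exact_mod_cast hc i
      linarith
    calc ∑ u ∈ scaledBox S c, decayWeight N u
        ≤ ∑' w, decayWeight N w := ENNReal.sum_le_tsum _
      _ = (∑' w, decayWeight N w) * β⁻¹ * β := by
        rw [mul_assoc, ENNReal.inv_mul_cancel hβ ENNReal.ofReal_ne_top, mul_one]
      _ ≤ _ := by gcongr; exact le_self_add
  · push Not at hc
    have hSR : (0:ℝ) < S := by exact_mod_cast hS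
    have hn : 0 < Real.sqrt n := Real.sqrt_pos.2 (Nat.cast_pos.2 hc.choose.pos)
    set K : ℝ := (S / (4 * Real.sqrt n)) ^ (-N) with hKdef
    have hpt : ∀ u ∈ scaledBox S c, decayWeight N u ≤ ENNReal.ofReal K * decayWeight N c := by
      intro u hu
      have hc0 := one_add_enorm2_pos (fun i => (c i : ℝ))
      rw [decayWeight, decayWeight, ← ENNReal.ofReal_mul (by positivity),
        ← Real.mul_rpow (by positivity) hc0.le]
      exact ENNReal.ofReal_le_ofReal (Real.rpow_le_rpow_of_nonpos (by positivity)
        (mul_one_add_enorm2_le_of_mem_scaledBox hS ⟨_, hc.choose_spec⟩ hu) (by linarith))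
    have hK : (scaledBox S c).card * K ≤ 2 ^ n * (4 * Real.sqrt n) ^ N := by
      have hSn : (S:ℝ) ^ n * (S:ℝ) ^ (-N) ≤ 1 := by
        rw [← Real.rpow_natCast, ← Real.rpow_add hSR]
        exact Real.rpow_le_one_of_one_le_of_nonpos (by exact_mod_cast hS) (by linarith)
      calc (scaledBox S c).card * K ≤ (2 * S) ^ n * K := by
            gcongr; exact card_scaledBox_le hS c
        _ = 2 ^ n * ((S:ℝ) ^ n * (S:ℝ) ^ (-N)) * (4 * Real.sqrt n) ^ N := by
            rw [hKdef, Real.div_rpow hSR.le (by positivity),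
              Real.rpow_neg (by positivity : (0:ℝ) ≤ 4 * Real.sqrt n), Real.rpow_neg hSR.le,
              mul_pow]
            field_simp
        _ ≤ 2 ^ n * 1 * (4 * Real.sqrt n) ^ N := by gcongr
        _ = 2 ^ n * (4 * Real.sqrt n) ^ N := by ring
    calc ∑ u ∈ scaledBox S c, decayWeight N u
        ≤ ∑ _u ∈ scaledBox S c, ENNReal.ofReal K * decayWeight N c := Finset.sum_le_sum hpt
      _ = ENNReal.ofReal ((scaledBox S c).card * K) * decayWeight N c := by
        rw [Finset.sum_const, nsmul_eq_mul, ← mul_assoc, ENNReal.ofReal_mul (by positivity),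
          ENNReal.ofReal_natCast]
      _ ≤ _ := by gcongr; exact le_add_self.trans' (ENNReal.ofReal_le_ofReal hK)

lemma sub_ediv_mem_scaledBox {n : ℕ} {d S : ℤ} (hd : 0 < d) (hS : 0 < S) {A k₀ k : IVec n}
    (hk : ∀ i, k i / S = k₀ i) :
    (fun i => A i - k i / d) ∈ scaledBox S (fun i => A i / S - k₀ i / d) := by
  refine Fintype.mem_piFinset.2 fun i => Finset.mem_Ioo.2 ?_
  obtain ⟨hk₁, hk₂⟩ := (Int.ediv_eq_iff_of_pos hS).1 (hk i)
  have hA := Int.ediv_mul_le (A i) hS.ne'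
  have hA' := Int.lt_ediv_add_one_mul_self (A i) hS
  have hq := Int.ediv_mul_le (k₀ i) hd.ne'
  have hq' := Int.lt_ediv_add_one_mul_self (k₀ i) hd
  have hlo : S * (k₀ i / d) ≤ k i / d := (Int.le_ediv_iff_mul_le hd).2 <| by
    nlinarith [mul_le_mul_of_nonneg_left hq hS.le]
  have hhi : k i / d < S * (k₀ i / d + 1) := (Int.ediv_lt_iff_lt_mul hd).2 <| by
    nlinarith [mul_le_mul_of_nonneg_left (Int.add_one_le_of_lt hq') hS.le]
  constructor <;> nlinarith

lemma exists_tsum_decayWeight_sub_ediv_le {n : ℕ} {N : ℝ} (hN : (n:ℝ) < N) {d : ℤ}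
    (hd : 0 < d) :
    ∃ C : ℝ≥0∞, C ≠ ⊤ ∧ ∀ S : ℤ, 0 < S → ∀ A k₀ : IVec n,
      ∑' k : {k : IVec n // ∀ i, k i / S = k₀ i}, decayWeight N (fun i => A i - k.1 i / d)
        ≤ C * decayWeight N (fun i => A i / S - k₀ i / d) := by
  obtain ⟨C, hC, hbox⟩ := exists_sum_decayWeight_scaledBox_le hN
  set R : Finset (IVec n) := Fintype.piFinset fun _ => Finset.Ico 0 d
  refine ⟨R.card * C, ENNReal.mul_ne_top (ENNReal.natCast_ne_top _) hC, fun S hS A k₀ => ?_⟩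
  set B := scaledBox S (fun i => A i / S - k₀ i / d)
  -- `k` is recovered from its remainders and quotients modulo `d`
  let φ : {k : IVec n // ∀ i, k i / S = k₀ i} → R ×ˢ B := fun k =>
    ⟨(fun i => k.1 i % d, fun i => A i - k.1 i / d), Finset.mem_product.2
      ⟨Fintype.mem_piFinset.2 fun i => Finset.mem_Ico.2
        ⟨Int.emod_nonneg _ hd.ne', Int.emod_lt_of_pos _ hd⟩,
      sub_ediv_mem_scaledBox hd hS k.2⟩⟩
  have hφ : Function.Injective φ := fun k k' h => Subtype.ext <| funext fun i => by
    have h₁ := congrFun (congrArg (fun x => x.1.1) h) i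
    have h₂ := congrFun (congrArg (fun x => x.1.2) h) i
    simp only [φ] at h₁ h₂
    have h₃ : k.1 i / d = k'.1 i / d := by omega
    rw [← Int.emod_add_mul_ediv (k.1 i) d, h₁, h₃, Int.emod_add_mul_ediv]
  calc ∑' k : {k : IVec n // ∀ i, k i / S = k₀ i}, decayWeight N (fun i => A i - k.1 i / d)
      ≤ ∑' x : R ×ˢ B, decayWeight N x.1.2 :=
        ENNReal.tsum_comp_le_tsum_of_injective hφ (fun x => decayWeight N x.1.2)
    _ = R.card * ∑ u ∈ B, decayWeight N u := by
        rw [Finset.tsum_subtype (R ×ˢ B) (fun x => decayWeight N x.2), Finset.sum_product]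
        simp only [Finset.sum_const, nsmul_eq_mul]
    _ ≤ R.card * C * decayWeight N (fun i => A i / S - k₀ i / d) := by
        rw [mul_assoc]; gcongr; exact hbox S hS _

lemma tsum_mul_tsum_preimage {α β : Type*} (φ : α → β) (c : β → ℝ≥0∞)
    (G : α → ℝ≥0∞) :
    ∑' b, c b * ∑' a : φ ⁻¹' {b}, G a = ∑' a, c (φ a) * G a := by
  rw [← ENNReal.tsum_fiberwise _ φ]
  refine tsum_congr fun b => ?_
  rw [← ENNReal.tsum_mul_left]
  exact tsum_congr fun a => by rw [show φ a = b from a.2]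

lemma tsum_decayWeight_mul_tsum_subset_QW {n : ℕ} (N : ℝ) {j j' : ℤ} (h : j - 8 ≤ j')
    (k : IVec n) (G : IVec n → ℝ≥0∞) :
    ∑' w : IVec n, decayWeight N w * ∑' k' : {k' // dyadicCube n j' k' ⊆ QW n j k w}, G k'
      = ∑' k' : IVec n,
          decayWeight N (fun i => k' i / 2 ^ (j' - (j - 8)).toNat - k i / 256) * G k' := by
  rw [← tsum_mul_tsum_preimage
    (fun k' : IVec n => fun i => k' i / 2 ^ (j' - (j - 8)).toNat - k i / 256)]
  refine tsum_congr fun w => congrArg (decayWeight N w * ·) ?_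
  refine (Equiv.subtypeEquivRight (q := (· ∈ _)) fun k' => ?_).tsum_eq (fun k' => G k'.1)
  simp only [dyadicCube_subset_QW_iff h, Set.mem_preimage, Set.mem_singleton_iff, funext_iff,
    sub_eq_iff_eq_add']

def qwMass {n : ℕ} (N : ℝ) (j j' : ℤ) (k : IVec n) (G : IVec n → ℝ≥0∞) : ℝ≥0∞ :=
  ∑' w : IVec n, decayWeight N w * ∑' k' : {k' // dyadicCube n j' k' ⊆ QW n j k w}, G k'

lemma exists_tsum_qwMass_le {n : ℕ} {N : ℝ} (hN : (n:ℝ) < N) :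
    ∃ C : ℝ≥0∞, C ≠ ⊤ ∧ ∀ (j₀ j j' : ℤ), j₀ ≤ j → j - 8 ≤ j' →
      ∀ (k₀ : IVec n) (G : IVec n → ℝ≥0∞),
        ∑' k : {k : IVec n // dyadicCube n j k ⊆ dyadicCube n j₀ k₀}, qwMass N j j' k G
          ≤ C * qwMass N j₀ j' k₀ G := by
  obtain ⟨C, hC, hsum⟩ := exists_tsum_decayWeight_sub_ediv_le hN (d := 256) (by norm_num)
  refine ⟨C, hC, fun j₀ j j' hj hj' k₀ G => ?_⟩
  set D : ℤ := 2 ^ (j' - (j - 8)).toNat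
  set S : ℤ := 2 ^ (j - j₀).toNat
  have hD₀ : (2:ℤ) ^ (j' - (j₀ - 8)).toNat = D * S := by
    rw [← pow_add]; congr 1; omega
  simp_rw [qwMass, tsum_decayWeight_mul_tsum_subset_QW N hj',
    tsum_decayWeight_mul_tsum_subset_QW N (show j₀ - 8 ≤ j' by omega), hD₀,
    ← Int.ediv_ediv_of_nonneg (by positivity : (0:ℤ) ≤ D)]
  rw [ENNReal.tsum_comm, ← ENNReal.tsum_mul_left]
  refine ENNReal.tsum_le_tsum fun k' => ?_
  rw [ENNReal.tsum_mul_right, ← mul_assoc]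
  gcongr
  rw [← (Equiv.subtypeEquivRight fun k =>
    dyadicCube_subset_dyadicCube_iff hj k k₀).symm.tsum_eq]
  exact hsum S (by positivity) (fun i => k' i / D) k₀

lemma exists_tsum_rpow_le {n : ℕ} {p δ N : ℝ} (hp : 1 < p) (hδ : 0 < δ) (hN : (n:ℝ) < N)
    (L : ℤ) (hL : L ≤ 8) :
    ∃ C : ℝ≥0∞, C ≠ ⊤ ∧ ∀ (j₀ : ℤ) (k₀ : IVec n) (j : ℤ), j₀ ≤ j →
      ∀ G : ℤ → IVec n → ℝ≥0∞,
      ∑' k : {k : IVec n // dyadicCube n j k ⊆ dyadicCube n j₀ k₀},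
        (∑' (j' : {j' : ℤ // j - L ≤ j'}) (w : IVec n), decayWeight N w *
          (∑' k' : {k' // dyadicCube n j' k' ⊆ QW n j k w}, G j' k') ^ (1/p)) ^ p
      ≤ C * ∑' j' : {j' : ℤ // j - L ≤ j'},
        ENNReal.ofReal ((2:ℝ) ^ (δ * ((j' : ℤ) - (j : ℝ)))) * qwMass N j₀ j' k₀ (G j') := by
  set q := p.conjExponent
  have hpq : p.HolderConjugate q := .conjExponent hp
  have hη : 0 < δ * q / p := by have := hpq.symm.pos; have := hpq.pos; positivity
  obtain ⟨C, hC, hcount⟩ := exists_tsum_qwMass_le hN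
  set K := (ENNReal.ofReal ((2:ℝ) ^ (δ * q / p * L))
    * (1 - ENNReal.ofReal ((2:ℝ) ^ (-(δ * q / p))))⁻¹
    * ∑' w : IVec n, decayWeight N w) ^ (p/q)
  have hK : K ≠ ⊤ := by
    have hgeom : 1 - ENNReal.ofReal ((2:ℝ) ^ (-(δ * q / p))) ≠ 0 :=
      (tsub_pos_iff_lt.2 (ENNReal.ofReal_lt_one.2
        (Real.rpow_lt_one_of_one_lt_of_neg one_lt_two (neg_neg_of_pos hη)))).ne'
    exact ENNReal.rpow_ne_top_of_nonneg (div_nonneg hpq.nonneg hpq.symm.nonneg)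
      (ENNReal.mul_ne_top (ENNReal.mul_ne_top ENNReal.ofReal_ne_top (ENNReal.inv_ne_top.2 hgeom))
        (tsum_decayWeight_ne_top hN))
  refine ⟨K * C, ENNReal.mul_ne_top hK hC, fun j₀ k₀ j hj G => ?_⟩
  calc _ ≤ ∑' k : {k : IVec n // dyadicCube n j k ⊆ dyadicCube n j₀ k₀}, K *
          ∑' j' : {j' : ℤ // j - L ≤ j'},
            ENNReal.ofReal ((2:ℝ) ^ (δ * ((j' : ℤ) - (j : ℝ)))) * qwMass N j j' k (G j') :=
        ENNReal.tsum_le_tsum fun k => tsum_tsum_decayWeight_rpow_le hpq δ N j L _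
    _ = K * ∑' j' : {j' : ℤ // j - L ≤ j'},
          ENNReal.ofReal ((2:ℝ) ^ (δ * ((j' : ℤ) - (j : ℝ)))) *
            ∑' k : {k : IVec n // dyadicCube n j k ⊆ dyadicCube n j₀ k₀}, qwMass N j j' k (G j') := by
        rw [ENNReal.tsum_mul_left, ENNReal.tsum_comm]
        simp_rw [ENNReal.tsum_mul_left]
    _ ≤ K * ∑' j' : {j' : ℤ // j - L ≤ j'},
          ENNReal.ofReal ((2:ℝ) ^ (δ * ((j' : ℤ) - (j : ℝ)))) * (C * qwMass N j₀ j' k₀ (G j')) := by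
        gcongr with j'
        exact hcount j₀ j j' hj (by have := j'.2; omega) k₀ (G j')
    _ = _ := by simp_rw [mul_left_comm _ C, ENNReal.tsum_mul_left, mul_assoc]

theorem statement9_general (n : ℕ) (p δ N : ℝ) (hp1 : 1 < p) (hδ : 0 < δ)
    (hN : (n : ℝ) < N) :
    ∃ C : ℝ, 0 < C ∧ ∀ (j₀ : ℤ) (k₀ : IVec n) (j : ℤ), j₀ ≤ j →
      ∀ a : En n → ℤ → IVec n → ℝ≥0,
      (∑' (ε : En n) (k : {k : IVec n // dyadicCube n j k ⊆ dyadicCube n j₀ k₀}),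
        (∑' (j' : {j' : ℤ // j - 5 ≤ j'}) (w : IVec n),
            ENNReal.ofReal ((1 + enorm2 (fun i => (w i : ℝ))) ^ (-N)) *
            (∑' (ε' : En n)
                (k' : {k' : IVec n // dyadicCube n (j' : ℤ) k' ⊆ QW n j (k : IVec n) w}),
                (a ε' (j' : ℤ) (k' : IVec n) : ℝ≥0∞) ^ (p : ℝ)) ^ (1 / p)) ^ (p : ℝ)) ≤
      ENNReal.ofReal C *
        ∑' (j' : {j' : ℤ // j - 5 ≤ j'}),
          ENNReal.ofReal ((2:ℝ) ^ (δ * (((j' : ℤ) : ℝ) - (j : ℝ)))) *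
          ∑' (w : IVec n),
            ENNReal.ofReal ((1 + enorm2 (fun i => (w i : ℝ))) ^ (-N)) *
            ∑' (ε' : En n) (k' : {k' : IVec n // dyadicCube n (j' : ℤ) k' ⊆ QW n j₀ k₀ w}),
              (a ε' (j' : ℤ) (k' : IVec n) : ℝ≥0∞) ^ (p : ℝ) := by
  obtain ⟨C, hC, hmain⟩ := exists_tsum_rpow_le hp1 hδ hN 5 (by norm_num)
  refine ⟨(Fintype.card (En n) * C).toReal + 1, by positivity, fun j₀ k₀ j hj a => ?_⟩
  set G : ℤ → IVec n → ℝ≥0∞ := fun j' k' => ∑' ε', (a ε' j' k' : ℝ≥0∞) ^ p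
  have hG : ∀ (j' : ℤ) (P : IVec n → Prop),
      ∑' (ε' : En n) (k' : {k' // P k'}), (a ε' j' k' : ℝ≥0∞) ^ p
        = ∑' k' : {k' // P k'}, G j' k' :=
    fun _ _ => ENNReal.tsum_comm
  simp only [hG, tsum_fintype (β := En n), Finset.sum_const, Finset.card_univ, nsmul_eq_mul]
  calc _ ≤ (Fintype.card (En n) : ℝ≥0∞) * (C * _) :=
        mul_le_mul_right (hmain j₀ k₀ j hj G) _
    _ ≤ _ := by
      rw [← mul_assoc]
      gcongr ?_ * _
      exact (ENNReal.le_ofReal_iff_toReal_le (ENNReal.mul_ne_top (ENNReal.natCast_ne_top _) hC)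
        (by positivity)).2 (le_add_of_nonneg_right zero_le_one)

/-- the summation estimate of Lemma `inequality4`
(`1 < p < ∞`, `δ > 0`, `N > n`), with both sides valued in `[0,∞]`. -/
theorem statement9 (n : ℕ) (hn : 1 ≤ n) (p δ N : ℝ) (hp1 : 1 < p) (hδ : 0 < δ)
    (hN : (n : ℝ) < N) :
    ∃ C : ℝ, 0 < C ∧ ∀ (j₀ : ℤ) (k₀ : IVec n) (j : ℤ), j₀ ≤ j →
      ∀ a : En n → ℤ → IVec n → ℝ≥0,
      (∑' (ε : En n) (k : {k : IVec n // dyadicCube n j k ⊆ dyadicCube n j₀ k₀}),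
        (∑' (j' : {j' : ℤ // j - 5 ≤ j'}) (w : IVec n),
            ENNReal.ofReal ((1 + enorm2 (fun i => (w i : ℝ))) ^ (-N)) *
            (∑' (ε' : En n)
                (k' : {k' : IVec n // dyadicCube n (j' : ℤ) k' ⊆ QW n j (k : IVec n) w}),
                (a ε' (j' : ℤ) (k' : IVec n) : ℝ≥0∞) ^ (p : ℝ)) ^ (1 / p)) ^ (p : ℝ)) ≤
      ENNReal.ofReal C *
        ∑' (j' : {j' : ℤ // j - 5 ≤ j'}),
          ENNReal.ofReal ((2:ℝ) ^ (δ * (((j' : ℤ) : ℝ) - (j : ℝ)))) *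
          ∑' (w : IVec n),
            ENNReal.ofReal ((1 + enorm2 (fun i => (w i : ℝ))) ^ (-N)) *
            ∑' (ε' : En n) (k' : {k' : IVec n // dyadicCube n (j' : ℤ) k' ⊆ QW n j₀ k₀ w}),
              (a ε' (j' : ℤ) (k' : IVec n) : ℝ≥0∞) ^ (p : ℝ) :=
  statement9_general n p δ N hp1 hδ hN
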